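/- arXiv:1906.00465 — 5 statements merged into one kernel-verified Lean document; each statement's English description precedes it below -/
import Mathlib

section
/- Let α > 0, −α < ρ < 0, T > 0, M ≥ 0, and let W : [0, T] → ℝ satisfy W(0) = 0 and |W(x) − W(y)| ≤ M|x − y|^α for all x, y ∈ [0, T]. Then for every u ∈ (0, T], |u^ρ W(u) + |ρ| ∫₀ᵘ (W(u) − W(u − y)) y^{ρ−1} dy| ≤ M · α/(ρ+α) · u^{ρ+α}; in particular the integral converges absolutely. -/
open MeasureTheory Set Filter

theorem frac_integral_bound_neg (α ρ T M : ℝ) (hα : 0 < α) (hρl : -α < ρ) (hρ : ρ < 0)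
    (hT : 0 < T) (hM : 0 ≤ M) (W : ℝ → ℝ) (hW0 : W 0 = 0)
    (hH : ∀ x ∈ Set.Icc (0:ℝ) T, ∀ y ∈ Set.Icc (0:ℝ) T,
      |W x - W y| ≤ M * |x - y| ^ α) :
    ∀ u ∈ Set.Ioc (0:ℝ) T,
      MeasureTheory.IntegrableOn (fun y => (W u - W (u - y)) * y ^ (ρ - 1)) (Set.Ioo 0 u) ∧
      |u ^ ρ * W u + |ρ| * ∫ y in Set.Ioo (0:ℝ) u, (W u - W (u - y)) * y ^ (ρ - 1)|
        ≤ M * (α / (ρ + α)) * u ^ (ρ + α) := by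
  -- continuity of W on [0,T]
  have hWc : ContinuousOn W (Set.Icc 0 T) := by
    intro x hx
    have h1 : Tendsto (fun y => M * |y - x| ^ α) (nhdsWithin x (Set.Icc 0 T)) (nhds 0) := by
      have h2 : Tendsto (fun y : ℝ => |y - x|) (nhds x) (nhds |x - x|) :=
        Continuous.tendsto (by continuity) x
      rw [sub_self, abs_zero] at h2
      have h3 : Tendsto (fun y : ℝ => |y - x| ^ α) (nhds x) (nhds ((0:ℝ) ^ α)) :=
        h2.rpow_const (Or.inr hα.le)
      rw [Real.zero_rpow hα.ne'] at h3
      have h4 : Tendsto (fun y : ℝ => M * |y - x| ^ α) (nhds x) (nhds (M * 0)) :=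
        h3.const_mul M
      rw [mul_zero] at h4
      exact h4.mono_left nhdsWithin_le_nhds
    have hd : Tendsto (fun y => dist (W y) (W x)) (nhdsWithin x (Set.Icc 0 T)) (nhds 0) := by
      apply squeeze_zero' (Eventually.of_forall fun y => dist_nonneg)
        (eventually_mem_nhdsWithin.mono fun y hy => ?_) h1
      simpa [Real.dist_eq] using hH y hy x hx
    exact tendsto_iff_dist_tendsto_zero.2 hd
  intro u hu
  obtain ⟨hu0, huT⟩ := hu
  have hρα : 0 < ρ + α := by linarith
  have hmem : ∀ y ∈ Set.Ioo (0:ℝ) u, u - y ∈ Set.Icc (0:ℝ) T :=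
    fun y hy => ⟨by linarith [hy.2], by linarith [hy.1]⟩
  have huI : u ∈ Set.Icc (0:ℝ) T := ⟨hu0.le, huT⟩
  -- pointwise bound
  have hbound : ∀ y ∈ Set.Ioo (0:ℝ) u,
      |(W u - W (u - y)) * y ^ (ρ - 1)| ≤ M * y ^ (ρ + α - 1) := by
    intro y hy
    have hy0 : 0 < y := hy.1
    have h1 : |W u - W (u - y)| ≤ M * y ^ α := by
      have := hH u huI (u - y) (hmem y hy)
      simpa [abs_of_pos hy0] using this
    have h2 : (0:ℝ) < y ^ (ρ - 1) := Real.rpow_pos_of_pos hy0 _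
    calc |(W u - W (u - y)) * y ^ (ρ - 1)| = |W u - W (u - y)| * y ^ (ρ - 1) := by
          rw [abs_mul, abs_of_pos h2]
      _ ≤ (M * y ^ α) * y ^ (ρ - 1) := by
          exact mul_le_mul_of_nonneg_right h1 h2.le
      _ = M * y ^ (ρ + α - 1) := by
          rw [mul_assoc, ← Real.rpow_add hy0]; ring_nf
  -- integrability of the dominating function
  have hgint : IntegrableOn (fun y => M * y ^ (ρ + α - 1)) (Set.Ioo 0 u) := by
    have h1 : IntervalIntegrable (fun y : ℝ => y ^ (ρ + α - 1)) volume 0 u :=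
      intervalIntegral.intervalIntegrable_rpow' (by linarith)
    have h2 : IntegrableOn (fun y : ℝ => y ^ (ρ + α - 1)) (Set.Ioc 0 u) :=
      (intervalIntegrable_iff_integrableOn_Ioc_of_le hu0.le).1 h1
    exact (h2.mono_set Set.Ioo_subset_Ioc_self).const_mul M
  -- measurability of the integrand
  have hmeas : AEStronglyMeasurable (fun y => (W u - W (u - y)) * y ^ (ρ - 1))
      (volume.restrict (Set.Ioo 0 u)) := by
    apply ContinuousOn.aestronglyMeasurable _ measurableSet_Ioo
    apply ContinuousOn.mul
    · apply ContinuousOn.sub continuousOn_const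
      exact hWc.comp (continuousOn_const.sub continuousOn_id) hmem
    · exact fun y hy => (Real.continuousAt_rpow_const y (ρ - 1)
        (Or.inl (ne_of_gt hy.1))).continuousWithinAt
  have hint : IntegrableOn (fun y => (W u - W (u - y)) * y ^ (ρ - 1)) (Set.Ioo 0 u) := by
    apply Integrable.mono' hgint hmeas
    exact (ae_restrict_iff' measurableSet_Ioo).2 (Eventually.of_forall fun y hy => by
      rw [Real.norm_eq_abs]; exact hbound y hy)
  refine ⟨hint, ?_⟩
  -- compute the integral of the dominating function
  have hcalc : ∫ y in Set.Ioo (0:ℝ) u, y ^ (ρ + α - 1) = u ^ (ρ + α) / (ρ + α) := by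
    rw [← MeasureTheory.integral_Ioc_eq_integral_Ioo, ← intervalIntegral.integral_of_le hu0.le,
      integral_rpow (Or.inl (by linarith))]
    rw [Real.zero_rpow (by intro h; linarith : ρ + α - 1 + 1 ≠ 0)]
    ring_nf
  -- bound the integral
  have hIle : |∫ y in Set.Ioo (0:ℝ) u, (W u - W (u - y)) * y ^ (ρ - 1)|
      ≤ M * (u ^ (ρ + α) / (ρ + α)) := by
    have := norm_integral_le_of_norm_le hgint
      ((ae_restrict_iff' measurableSet_Ioo).2 (Eventually.of_forall fun y hy => by
        rw [Real.norm_eq_abs]; exact hbound y hy))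
    rw [Real.norm_eq_abs] at this
    refine this.trans (le_of_eq ?_)
    rw [MeasureTheory.integral_const_mul, hcalc]
  -- bound the first term
  have hfirst : |u ^ ρ * W u| ≤ M * u ^ (ρ + α) := by
    have h1 : |W u| ≤ M * u ^ α := by
      have := hH u huI 0 ⟨le_refl 0, hT.le⟩
      simpa [hW0, abs_of_pos hu0] using this
    have h2 : (0:ℝ) < u ^ ρ := Real.rpow_pos_of_pos hu0 _
    calc |u ^ ρ * W u| = u ^ ρ * |W u| := by rw [abs_mul, abs_of_pos h2]
      _ ≤ u ^ ρ * (M * u ^ α) := mul_le_mul_of_nonneg_left h1 h2.le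
      _ = M * (u ^ ρ * u ^ α) := by ring
      _ = M * u ^ (ρ + α) := by rw [← Real.rpow_add hu0]
  set I := ∫ y in Set.Ioo (0:ℝ) u, (W u - W (u - y)) * y ^ (ρ - 1) with hI
  have habs : |(|ρ| * I)| = -ρ * |I| := by rw [abs_mul, abs_abs, abs_of_neg hρ]
  have h4 : -ρ * |I| ≤ -ρ * (M * (u ^ (ρ + α) / (ρ + α))) :=
    mul_le_mul_of_nonneg_left hIle (by linarith)
  have hfin : M * u ^ (ρ + α) + (-ρ) * (M * (u ^ (ρ + α) / (ρ + α)))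
      = M * (α / (ρ + α)) * u ^ (ρ + α) := by
    field_simp
    ring
  have htri := abs_add_le (u ^ ρ * W u) (|ρ| * I)
  linarith
end

section
/- Let α > 0, −α < ρ < 0, T > 0, M ≥ 0, and let W : ℝ → ℝ satisfy W(x) = 0 for x ≤ 0 and |W(x) − W(y)| ≤ M|x − y|^α for all x, y ≤ T. Define Y(u) = |ρ| ∫₀^∞ (W(u) − W(u − y)) y^{ρ−1} dy for u ∈ [0, T] (with Y(0) = 0). Then for all 0 ≤ v < u ≤ T, |Y(u) − Y(v)| ≤ 2 M α (ρ + α)^{−1} (u − v)^{ρ+α}. -/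
open MeasureTheory Set

-- Continuity from Hölder
lemma contW_aux {T M α : ℝ} (hα : 0 < α) (hM : 0 ≤ M) {W : ℝ → ℝ}
    (hH : ∀ x ≤ T, ∀ y ≤ T, |W x - W y| ≤ M * |x - y| ^ α) :
    ContinuousOn W (Set.Iic T) := by
  have hol : HolderOnWith M.toNNReal α.toNNReal W (Set.Iic T) := by
    intro x hx y hy
    rw [edist_dist, edist_dist, Real.dist_eq, Real.dist_eq]
    calc ENNReal.ofReal |W x - W y| ≤ ENNReal.ofReal (M * |x - y| ^ α) :=
          ENNReal.ofReal_le_ofReal (hH x hx y hy)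
      _ = ENNReal.ofReal M * ENNReal.ofReal (|x - y| ^ α) := ENNReal.ofReal_mul hM
      _ = ↑M.toNNReal * (ENNReal.ofReal |x - y|) ^ ((α.toNNReal : ℝ)) := by
          rw [Real.coe_toNNReal α hα.le,
            ← ENNReal.ofReal_rpow_of_nonneg (abs_nonneg _) hα.le]
          rfl
  exact hol.continuousOn (Real.toNNReal_pos.mpr hα)

-- integrability
lemma integ_aux {T M α ρ : ℝ} (hα : 0 < α) (hρl : -α < ρ) (hρ : ρ < 0) (hM : 0 ≤ M)
    {W : ℝ → ℝ} (hW0 : ∀ x ≤ (0:ℝ), W x = 0)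
    (hH : ∀ x ≤ T, ∀ y ≤ T, |W x - W y| ≤ M * |x - y| ^ α)
    {w : ℝ} (hw0 : 0 ≤ w) (hwT : w ≤ T) :
    IntegrableOn (fun y => (W w - W (w - y)) * y ^ (ρ - 1)) (Set.Ioi (0:ℝ)) := by
  rcases eq_or_lt_of_le hw0 with rfl | hw
  · refine (integrableOn_zero).congr_fun (fun y hy => ?_) measurableSet_Ioi
    have h1 : W 0 = 0 := hW0 0 le_rfl
    have h2 : W (-y) = 0 := hW0 _ (by simp at hy ⊢; linarith)
    simp [h1, h2]
  · have contW := contW_aux hα hM hH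
    have c1 : ContinuousOn (fun y : ℝ => W (w - y)) (Set.Ioi 0) := by
      apply contW.comp (Continuous.continuousOn (by continuity))
      intro y hy
      simp only [Set.mem_Iic]
      have : (0:ℝ) < y := hy
      linarith
    have c2 : ContinuousOn (fun y : ℝ => y ^ (ρ - 1)) (Set.Ioi 0) := fun y hy =>
      (Real.continuousAt_rpow_const y (ρ - 1) (Or.inl (ne_of_gt hy))).continuousWithinAt
    have cf : ContinuousOn (fun y => (W w - W (w - y)) * y ^ (ρ - 1)) (Set.Ioi 0) :=
      (continuousOn_const.sub c1).mul c2
    have h1 : IntegrableOn (fun y => (W w - W (w - y)) * y ^ (ρ - 1)) (Set.Ioc 0 w) := by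
      have hbint : IntegrableOn (fun y : ℝ => M * y ^ (α + ρ - 1)) (Set.Ioc 0 w) := by
        have := intervalIntegral.intervalIntegrable_rpow' (r := α + ρ - 1) (by linarith) (a := 0) (b := w)
        rw [intervalIntegrable_iff_integrableOn_Ioc_of_le hw0] at this
        exact this.const_mul M
      refine Integrable.mono' hbint
        ((cf.mono Set.Ioc_subset_Ioi_self).aestronglyMeasurable measurableSet_Ioc) ?_
      rw [ae_restrict_iff' measurableSet_Ioc]
      refine Filter.Eventually.of_forall (fun y hy => ?_)
      have hy0 : (0:ℝ) < y := hy.1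
      have hbd : |W w - W (w - y)| ≤ M * y ^ α := by
        have := hH w hwT (w - y) (by linarith)
        rwa [show w - (w - y) = y by ring, abs_of_pos hy0] at this
      have hrp : (0:ℝ) ≤ y ^ (ρ - 1) := Real.rpow_nonneg hy0.le _
      calc ‖(W w - W (w - y)) * y ^ (ρ - 1)‖
          = |W w - W (w - y)| * y ^ (ρ - 1) := by
            rw [norm_mul, Real.norm_eq_abs, Real.norm_eq_abs, abs_of_nonneg hrp]
        _ ≤ (M * y ^ α) * y ^ (ρ - 1) := mul_le_mul_of_nonneg_right hbd hrp
        _ = M * y ^ (α + ρ - 1) := by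
            rw [mul_assoc, ← Real.rpow_add hy0]; ring_nf
    have h2 : IntegrableOn (fun y => (W w - W (w - y)) * y ^ (ρ - 1)) (Set.Ioi w) := by
      have hint : IntegrableOn (fun y : ℝ => W w * y ^ (ρ - 1)) (Set.Ioi w) :=
        (integrableOn_Ioi_rpow_of_lt (by linarith) hw).const_mul (W w)
      refine hint.congr_fun (fun y hy => ?_) measurableSet_Ioi
      have : W (w - y) = 0 := hW0 _ (by simp at hy ⊢; linarith)
      rw [this, sub_zero]
    have := h1.union h2
    rwa [Set.Ioc_union_Ioi_eq_Ioi hw0] at this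

theorem holder_Y_neg_rho (α ρ T M : ℝ) (hα : 0 < α) (hρl : -α < ρ) (hρ : ρ < 0)
    (hT : 0 < T) (hM : 0 ≤ M) (W : ℝ → ℝ) (hW0 : ∀ x ≤ (0:ℝ), W x = 0)
    (hH : ∀ x ≤ T, ∀ y ≤ T, |W x - W y| ≤ M * |x - y| ^ α)
    (Y : ℝ → ℝ)
    (hY : ∀ u ∈ Set.Icc (0:ℝ) T,
      Y u = |ρ| * ∫ y in Set.Ioi (0:ℝ), (W u - W (u - y)) * y ^ (ρ - 1)) :
    ∀ v u, 0 ≤ v → v < u → u ≤ T →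
      |Y u - Y v| ≤ 2 * M * α * (ρ + α)⁻¹ * (u - v) ^ (ρ + α) := by
  intro v u hv huv huT
  have hvT : v ≤ T := by linarith
  have hu0 : (0:ℝ) ≤ u := by linarith
  set h := u - v with hhdef
  have hh0 : 0 < h := by simp only [hhdef]; linarith
  have Iu := integ_aux hα hρl hρ hM hW0 hH hu0 huT
  have Iv := integ_aux hα hρl hρ hM hW0 hH hv hvT
  rw [hY u ⟨hu0, huT⟩, hY v ⟨hv, hvT⟩, ← mul_sub, ← MeasureTheory.integral_sub Iu Iv,
    abs_mul, abs_abs]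
  set G : ℝ → ℝ := fun y =>
    (W u - W (u - y)) * y ^ (ρ - 1) - (W v - W (v - y)) * y ^ (ρ - 1) with hGdef
  have hG : IntegrableOn G (Set.Ioi 0) := Iu.sub Iv
  have hsub1 : Set.Ioc (0:ℝ) h ⊆ Set.Ioi 0 := Set.Ioc_subset_Ioi_self
  have hsub2 : Set.Ioi h ⊆ Set.Ioi (0:ℝ) := Set.Ioi_subset_Ioi hh0.le
  have split : ∫ y in Set.Ioi (0:ℝ), G y
      = (∫ y in Set.Ioc (0:ℝ) h, G y) + ∫ y in Set.Ioi h, G y := by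
    rw [← MeasureTheory.setIntegral_union (Set.Ioc_disjoint_Ioi le_rfl) measurableSet_Ioi
      (hG.mono_set hsub1) (hG.mono_set hsub2), Set.Ioc_union_Ioi_eq_Ioi hh0.le]
  -- pointwise bounds
  have b1 : |∫ y in Set.Ioc (0:ℝ) h, G y|
      ≤ ∫ y in Set.Ioc (0:ℝ) h, 2 * M * y ^ (α + ρ - 1) := by
    have hbint : IntegrableOn (fun y : ℝ => 2 * M * y ^ (α + ρ - 1)) (Set.Ioc 0 h) := by
      have := intervalIntegral.intervalIntegrable_rpow' (r := α + ρ - 1) (by linarith)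
        (a := 0) (b := h)
      rw [intervalIntegrable_iff_integrableOn_Ioc_of_le hh0.le] at this
      exact this.const_mul _
    refine le_trans (by simpa [Real.norm_eq_abs] using
      MeasureTheory.norm_integral_le_integral_norm (μ := volume.restrict (Set.Ioc 0 h)) G) ?_
    refine MeasureTheory.setIntegral_mono_on (hG.mono_set hsub1).abs hbint
      measurableSet_Ioc (fun y hy => ?_)
    have hy0 : (0:ℝ) < y := hy.1
    have hc : (0:ℝ) ≤ y ^ (ρ - 1) := Real.rpow_nonneg hy0.le _
    have hA : |W u - W (u - y)| ≤ M * y ^ α := by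
      have := hH u huT (u - y) (by linarith)
      rwa [show u - (u - y) = y by ring, abs_of_pos hy0] at this
    have hB : |W v - W (v - y)| ≤ M * y ^ α := by
      have := hH v hvT (v - y) (by linarith)
      rwa [show v - (v - y) = y by ring, abs_of_pos hy0] at this
    calc |G y| = |(W u - W (u - y)) - (W v - W (v - y))| * y ^ (ρ - 1) := by
          show |(W u - W (u - y)) * y ^ (ρ - 1) - (W v - W (v - y)) * y ^ (ρ - 1)| = _
          rw [← sub_mul, abs_mul, abs_of_nonneg hc]
      _ ≤ (|W u - W (u - y)| + |W v - W (v - y)|) * y ^ (ρ - 1) :=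
          mul_le_mul_of_nonneg_right (abs_sub _ _) hc
      _ ≤ (M * y ^ α + M * y ^ α) * y ^ (ρ - 1) :=
          mul_le_mul_of_nonneg_right (add_le_add hA hB) hc
      _ = 2 * M * y ^ (α + ρ - 1) := by
          rw [show M * y ^ α + M * y ^ α = 2 * M * y ^ α by ring, mul_assoc,
            ← Real.rpow_add hy0]
          ring_nf
  have b2 : |∫ y in Set.Ioi h, G y|
      ≤ ∫ y in Set.Ioi h, (2 * M * h ^ α) * y ^ (ρ - 1) := by
    have hbint : IntegrableOn (fun y : ℝ => (2 * M * h ^ α) * y ^ (ρ - 1)) (Set.Ioi h) :=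
      (integrableOn_Ioi_rpow_of_lt (by linarith) hh0).const_mul _
    refine le_trans (by simpa [Real.norm_eq_abs] using
      MeasureTheory.norm_integral_le_integral_norm (μ := volume.restrict (Set.Ioi h)) G) ?_
    refine MeasureTheory.setIntegral_mono_on (hG.mono_set hsub2).abs hbint
      measurableSet_Ioi (fun y hy => ?_)
    have hyh : h < y := hy
    have hy0 : (0:ℝ) < y := lt_trans hh0 hyh
    have hc : (0:ℝ) ≤ y ^ (ρ - 1) := Real.rpow_nonneg hy0.le _
    have hA : |W u - W v| ≤ M * h ^ α := by
      have := hH u huT v hvT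
      rwa [show |u - v| = h by rw [abs_of_pos (by linarith)]] at this
    have hB : |W (u - y) - W (v - y)| ≤ M * h ^ α := by
      have := hH (u - y) (by linarith) (v - y) (by linarith)
      rwa [show |u - y - (v - y)| = h by rw [show u - y - (v - y) = u - v by ring,
        abs_of_pos (by linarith : (0:ℝ) < u - v)]] at this
    calc |G y| = |(W u - W v) - (W (u - y) - W (v - y))| * y ^ (ρ - 1) := by
          show |(W u - W (u - y)) * y ^ (ρ - 1) - (W v - W (v - y)) * y ^ (ρ - 1)| = _
          rw [show (W u - W (u - y)) * y ^ (ρ - 1) - (W v - W (v - y)) * y ^ (ρ - 1)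
            = ((W u - W v) - (W (u - y) - W (v - y))) * y ^ (ρ - 1) by ring,
            abs_mul, abs_of_nonneg hc]
      _ ≤ (|W u - W v| + |W (u - y) - W (v - y)|) * y ^ (ρ - 1) :=
          mul_le_mul_of_nonneg_right (abs_sub _ _) hc
      _ ≤ (M * h ^ α + M * h ^ α) * y ^ (ρ - 1) :=
          mul_le_mul_of_nonneg_right (add_le_add hA hB) hc
      _ = (2 * M * h ^ α) * y ^ (ρ - 1) := by ring
  -- compute the bounding integrals
  have e1 : (∫ y in Set.Ioc (0:ℝ) h, 2 * M * y ^ (α + ρ - 1))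
      = 2 * M * (h ^ (ρ + α) / (ρ + α)) := by
    rw [MeasureTheory.integral_const_mul, ← intervalIntegral.integral_of_le hh0.le,
      integral_rpow (Or.inl (by linarith)), show α + ρ - 1 + 1 = ρ + α by ring,
      Real.zero_rpow (by linarith : (0:ℝ) < ρ + α).ne']
    ring
  have e2 : (∫ y in Set.Ioi h, (2 * M * h ^ α) * y ^ (ρ - 1))
      = (2 * M * h ^ α) * (-h ^ ρ / ρ) := by
    rw [MeasureTheory.integral_const_mul, integral_Ioi_rpow_of_lt (by linarith) hh0,
      show ρ - 1 + 1 = ρ by ring]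
  have hρα : (0:ℝ) < ρ + α := by linarith
  calc |ρ| * |∫ y in Set.Ioi (0:ℝ), G y|
      ≤ |ρ| * ((∫ y in Set.Ioc (0:ℝ) h, 2 * M * y ^ (α + ρ - 1))
          + ∫ y in Set.Ioi h, (2 * M * h ^ α) * y ^ (ρ - 1)) := by
        refine mul_le_mul_of_nonneg_left ?_ (abs_nonneg ρ)
        rw [split]
        exact (abs_add_le _ _).trans (add_le_add b1 b2)
    _ = 2 * M * α * (ρ + α)⁻¹ * h ^ (ρ + α) := by
        rw [e1, e2, abs_of_neg hρ]
        have hX : h ^ α * h ^ ρ = h ^ (ρ + α) := by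
          rw [← Real.rpow_add hh0, add_comm]
        have h2 : 2 * M * h ^ α * (-h ^ ρ / ρ) = 2 * M * h ^ (ρ + α) * (-1 / ρ) := by
          rw [← hX]; ring
        rw [h2]
        have hρ0 : ρ ≠ 0 := hρ.ne
        field_simp [hρ0, hρα.ne']
        ring
end

section
/- Let α > 0, ρ ≥ 1, T > 0, M ≥ 0, and let W : [0, T] → ℝ satisfy W(0) = 0 and |W(x) − W(y)| ≤ M|x − y|^α for all x, y ∈ [0, T]. Define Y(u) = ρ ∫₀ᵘ (u − y)^{ρ−1} W(y) dy. Then for all 0 ≤ v ≤ u ≤ T, |Y(u) − Y(v)| ≤ ρ (ρ + α) M B(ρ, α+1) T^{ρ+α−1} (u − v). -/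
open intervalIntegral Set Filter

lemma cont_rpow {c : ℝ} (hc : 0 ≤ c) : Continuous fun x : ℝ => x ^ c :=
  continuous_iff_continuousAt.2 fun x => Real.continuousAt_rpow_const x c (Or.inr hc)

lemma rpow_sub_rpow_le {q T v u : ℝ} (hq : 1 ≤ q) (hv : 0 ≤ v) (hvu : v ≤ u) (huT : u ≤ T) :
    u ^ q - v ^ q ≤ q * T ^ (q - 1) * (u - v) := by
  have hq0 : (0:ℝ) ≤ q := le_trans zero_le_one hq
  have key := norm_image_sub_le_of_norm_deriv_le_segment'
    (f := fun x : ℝ => x ^ q) (f' := fun x : ℝ => q * x ^ (q - 1)) (a := v) (b := u)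
    (C := q * T ^ (q - 1))
    (fun x _ => (Real.hasDerivAt_rpow_const (Or.inr hq)).hasDerivWithinAt)
    (fun x hx => by
      rw [Real.norm_eq_abs, abs_of_nonneg (mul_nonneg hq0 (Real.rpow_nonneg (le_trans hv hx.1) _))]
      exact mul_le_mul_of_nonneg_left
        (Real.rpow_le_rpow (le_trans hv hx.1) (le_trans hx.2.le huT) (by linarith)) hq0)
    u (right_mem_Icc.2 hvu)
  calc u ^ q - v ^ q ≤ |u ^ q - v ^ q| := le_abs_self _
    _ ≤ q * T ^ (q - 1) * (u - v) := key

noncomputable def betaFn (a b : ℝ) : ℝ := ∫ t in (0:ℝ)..1, t ^ (a - 1) * (1 - t) ^ (b - 1)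

lemma betaFn_swap {ρ α : ℝ} :
    betaFn ρ (α + 1) = ∫ s in (0:ℝ)..1, (1 - s) ^ (ρ - 1) * s ^ α := by
  have := intervalIntegral.integral_comp_sub_left
    (f := fun x : ℝ => x ^ (ρ - 1) * (1 - x) ^ α) (a := (0:ℝ)) (b := 1) 1
  simp only [sub_zero, sub_self] at this
  rw [betaFn, add_sub_cancel_right, ← this]
  apply intervalIntegral.integral_congr
  intro s _
  simp [sub_sub_cancel]

lemma G_eq {ρ α : ℝ} (hρ : 1 ≤ ρ) (hα : 0 < α) {t : ℝ} (ht : 0 ≤ t) :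
    (∫ y in (0:ℝ)..t, (t - y) ^ (ρ - 1) * y ^ α) = t ^ (ρ + α) * betaFn ρ (α + 1) := by
  rcases eq_or_lt_of_le ht with h0 | h0
  · rw [← h0]
    simp [Real.zero_rpow (by positivity : ρ + α ≠ 0)]
  · have hsub := intervalIntegral.smul_integral_comp_mul_left
      (f := fun y : ℝ => (t - y) ^ (ρ - 1) * y ^ α) (a := (0:ℝ)) (b := 1) t
    simp only [mul_zero, mul_one, smul_eq_mul] at hsub
    rw [← hsub]
    have hcongr : (∫ s in (0:ℝ)..1, (t - t * s) ^ (ρ - 1) * (t * s) ^ α)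
        = ∫ s in (0:ℝ)..1, (t ^ (ρ - 1) * t ^ α) * ((1 - s) ^ (ρ - 1) * s ^ α) := by
      apply intervalIntegral.integral_congr
      intro s hs
      rw [Set.uIcc_of_le zero_le_one] at hs
      have h1s : 0 ≤ 1 - s := by linarith [hs.2]
      show (t - t * s) ^ (ρ - 1) * (t * s) ^ α = _
      have he : t - t * s = t * (1 - s) := by ring
      rw [he, Real.mul_rpow ht h1s, Real.mul_rpow ht hs.1]
      ring
    rw [hcongr, intervalIntegral.integral_const_mul, betaFn_swap]
    rw [← Real.rpow_add h0, ← mul_assoc,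
      ← Real.rpow_one_add' ht (ne_of_gt (by linarith : (0:ℝ) < 1 + (ρ - 1 + α)))]
    ring_nf

lemma W_cont {α T M : ℝ} {W : ℝ → ℝ} (hα : 0 < α)
    (hH : ∀ x ∈ Set.Icc (0:ℝ) T, ∀ y ∈ Set.Icc (0:ℝ) T, |W x - W y| ≤ M * |x - y| ^ α) :
    ContinuousOn W (Set.Icc 0 T) := by
  intro x hx
  have hbnd : Tendsto (fun y => M * |y - x| ^ α) (nhdsWithin x (Set.Icc 0 T)) (nhds 0) := by
    have hc : Continuous fun y : ℝ => M * |y - x| ^ α := by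
      apply continuous_const.mul
      exact (continuous_iff_continuousAt.2 fun z =>
        Real.continuousAt_rpow_const z α (Or.inr hα.le)).comp
        (continuous_abs.comp (continuous_id.sub continuous_const))
    have h0 : M * |x - x| ^ α = 0 := by
      simp [Real.zero_rpow hα.ne']
    have := (hc.continuousAt (x := x)).continuousWithinAt (s := Set.Icc 0 T)
    rw [ContinuousWithinAt, h0] at this
    exact this
  have hW : Tendsto (fun y => W y - W x) (nhdsWithin x (Set.Icc 0 T)) (nhds 0) := by
    apply squeeze_zero_norm' _ hbnd
    filter_upwards [self_mem_nhdsWithin] with y hy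
    exact hH y hy x hx
  have := hW.add (tendsto_const_nhds (x := W x))
  rw [zero_add] at this
  exact this.congr (fun y => by ring)

theorem lipschitz_Y_rho_ge_one (α ρ T M : ℝ) (hα : 0 < α) (hρ : 1 ≤ ρ) (hT : 0 < T)
    (hM : 0 ≤ M) (W : ℝ → ℝ) (hW0 : W 0 = 0)
    (hH : ∀ x ∈ Set.Icc (0:ℝ) T, ∀ y ∈ Set.Icc (0:ℝ) T,
      |W x - W y| ≤ M * |x - y| ^ α)
    (Y : ℝ → ℝ)
    (hY : ∀ u ∈ Set.Icc (0:ℝ) T, Y u = ρ * ∫ y in (0:ℝ)..u, (u - y) ^ (ρ - 1) * W y) :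
    ∀ v u, 0 ≤ v → v ≤ u → u ≤ T →
      |Y u - Y v| ≤ ρ * (ρ + α) * M * betaFn ρ (α + 1) * T ^ (ρ + α - 1) * (u - v) := by
  intro v u hv hvu huT
  have hu0 : 0 ≤ u := hv.trans hvu
  have hvT : v ≤ T := hvu.trans huT
  have hρ0 : (0:ℝ) < ρ := lt_of_lt_of_le one_pos hρ
  have hp : (0:ℝ) ≤ ρ - 1 := by linarith
  have hWc : ContinuousOn W (Set.Icc 0 T) := W_cont hα hH
  -- integrability of the main integrand
  have hK_int : ∀ t a b : ℝ, 0 ≤ a → a ≤ b → b ≤ T →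
      IntervalIntegrable (fun y => (t - y) ^ (ρ - 1) * W y) MeasureTheory.volume a b := by
    intro t a b ha hab hbT
    apply ContinuousOn.intervalIntegrable
    apply ContinuousOn.mul _ (hWc.mono (by rw [Set.uIcc_of_le hab]; exact Set.Icc_subset_Icc ha hbT))
    exact ((cont_rpow hp).comp (continuous_const.sub continuous_id)).continuousOn
  -- integrability of the comparison integrands
  have hGc : ∀ t : ℝ, Continuous (fun y : ℝ => (t - y) ^ (ρ - 1) * y ^ α) := fun t =>
    ((cont_rpow hp).comp (continuous_const.sub continuous_id)).mul (cont_rpow hα.le)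
  have hG_int : ∀ t a b : ℝ,
      IntervalIntegrable (fun y => (t - y) ^ (ρ - 1) * y ^ α) MeasureTheory.volume a b :=
    fun t a b => (hGc t).intervalIntegrable a b
  -- pointwise bound on |W|
  have hWy : ∀ y ∈ Set.Icc (0:ℝ) T, |W y| ≤ M * y ^ α := by
    intro y hy
    have := hH y hy 0 ⟨le_refl 0, hT.le⟩
    simpa [hW0, abs_of_nonneg hy.1] using this
  -- decompose Y u - Y v
  have hIu : (∫ y in (0:ℝ)..u, (u - y) ^ (ρ - 1) * W y)
      = (∫ y in (0:ℝ)..v, (u - y) ^ (ρ - 1) * W y) + ∫ y in v..u, (u - y) ^ (ρ - 1) * W y :=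
    (intervalIntegral.integral_add_adjacent_intervals
      (hK_int u 0 v le_rfl hv hvT) (hK_int u v u hv hvu huT)).symm
  have hdiff : Y u - Y v = ρ *
      ((∫ y in (0:ℝ)..v, ((u - y) ^ (ρ - 1) * W y - (v - y) ^ (ρ - 1) * W y))
        + ∫ y in v..u, (u - y) ^ (ρ - 1) * W y) := by
    rw [hY u ⟨hu0, huT⟩, hY v ⟨hv, hvT⟩, hIu,
      intervalIntegral.integral_sub (hK_int u 0 v le_rfl hv hvT) (hK_int v 0 v le_rfl hv hvT)]
    ring
  -- bound the first integral
  have hb1 : |∫ y in (0:ℝ)..v, ((u - y) ^ (ρ - 1) * W y - (v - y) ^ (ρ - 1) * W y)|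
      ≤ ∫ y in (0:ℝ)..v, M * (((u - y) ^ (ρ - 1) - (v - y) ^ (ρ - 1)) * y ^ α) := by
    have h1 := intervalIntegral.norm_integral_le_integral_norm (μ := MeasureTheory.volume)
      (f := fun y => (u - y) ^ (ρ - 1) * W y - (v - y) ^ (ρ - 1) * W y) (a := (0:ℝ)) (b := v) hv
    rw [Real.norm_eq_abs] at h1
    refine h1.trans (intervalIntegral.integral_mono_on hv
      (((hK_int u 0 v le_rfl hv hvT).sub (hK_int v 0 v le_rfl hv hvT)).norm)
      ((continuous_const.mul ((((cont_rpow hp).comp (continuous_const.sub continuous_id)).sub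
        ((cont_rpow hp).comp (continuous_const.sub continuous_id))).mul
        (cont_rpow hα.le))).intervalIntegrable 0 v) ?_)
    intro y hy
    have hyT : y ∈ Set.Icc (0:ℝ) T := ⟨hy.1, hy.2.trans hvT⟩
    have hmon : (v - y) ^ (ρ - 1) ≤ (u - y) ^ (ρ - 1) :=
      Real.rpow_le_rpow (by linarith [hy.2]) (by linarith) hp
    have hWb := hWy y hyT
    calc ‖(u - y) ^ (ρ - 1) * W y - (v - y) ^ (ρ - 1) * W y‖
        = ((u - y) ^ (ρ - 1) - (v - y) ^ (ρ - 1)) * |W y| := by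
          rw [Real.norm_eq_abs, ← sub_mul, abs_mul, abs_of_nonneg (by linarith)]
      _ ≤ ((u - y) ^ (ρ - 1) - (v - y) ^ (ρ - 1)) * (M * y ^ α) :=
          mul_le_mul_of_nonneg_left hWb (by linarith)
      _ = M * (((u - y) ^ (ρ - 1) - (v - y) ^ (ρ - 1)) * y ^ α) := by ring
  -- bound the second integral
  have hb2 : |∫ y in v..u, (u - y) ^ (ρ - 1) * W y|
      ≤ ∫ y in v..u, M * ((u - y) ^ (ρ - 1) * y ^ α) := by
    have h1 := intervalIntegral.norm_integral_le_integral_norm (μ := MeasureTheory.volume)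
      (f := fun y => (u - y) ^ (ρ - 1) * W y) (a := v) (b := u) hvu
    rw [Real.norm_eq_abs] at h1
    refine h1.trans (intervalIntegral.integral_mono_on hvu
      ((hK_int u v u hv hvu huT).norm)
      ((continuous_const.mul (hGc u)).intervalIntegrable v u) ?_)
    intro y hy
    have hyT : y ∈ Set.Icc (0:ℝ) T := ⟨hv.trans hy.1, hy.2.trans huT⟩
    have hWb := hWy y hyT
    calc ‖(u - y) ^ (ρ - 1) * W y‖ = (u - y) ^ (ρ - 1) * |W y| := by
          rw [Real.norm_eq_abs, abs_mul, abs_of_nonneg (Real.rpow_nonneg (by linarith [hy.2]) _)]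
      _ ≤ (u - y) ^ (ρ - 1) * (M * y ^ α) :=
          mul_le_mul_of_nonneg_left hWb (Real.rpow_nonneg (by linarith [hy.2]) _)
      _ = M * ((u - y) ^ (ρ - 1) * y ^ α) := by ring
  -- rewrite the comparison integrals
  have e1 : (∫ y in (0:ℝ)..v, M * (((u - y) ^ (ρ - 1) - (v - y) ^ (ρ - 1)) * y ^ α))
      = M * (∫ y in (0:ℝ)..v, (u - y) ^ (ρ - 1) * y ^ α)
        - M * (∫ y in (0:ℝ)..v, (v - y) ^ (ρ - 1) * y ^ α) := by
    rw [← mul_sub, ← intervalIntegral.integral_sub (hG_int u 0 v) (hG_int v 0 v),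
      ← intervalIntegral.integral_const_mul]
    exact intervalIntegral.integral_congr fun y _ => by ring
  have e2 : (∫ y in v..u, M * ((u - y) ^ (ρ - 1) * y ^ α))
      = M * ∫ y in v..u, (u - y) ^ (ρ - 1) * y ^ α :=
    intervalIntegral.integral_const_mul _ _
  have e3 : (∫ y in (0:ℝ)..v, (u - y) ^ (ρ - 1) * y ^ α)
      + (∫ y in v..u, (u - y) ^ (ρ - 1) * y ^ α)
      = ∫ y in (0:ℝ)..u, (u - y) ^ (ρ - 1) * y ^ α :=
    intervalIntegral.integral_add_adjacent_intervals (hG_int u 0 v) (hG_int u v u)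
  have hGu := G_eq hρ hα hu0
  have hGv := G_eq hρ hα hv
  have hBnn : 0 ≤ betaFn ρ (α + 1) := by
    apply intervalIntegral.integral_nonneg zero_le_one
    intro s hs
    exact mul_nonneg (Real.rpow_nonneg hs.1 _) (Real.rpow_nonneg (by linarith [hs.2]) _)
  have hpow := rpow_sub_rpow_le (q := ρ + α) (by linarith) hv hvu huT
  -- put everything together
  have habs : |Y u - Y v| ≤ ρ * (M * ((u ^ (ρ + α) - v ^ (ρ + α)) * betaFn ρ (α + 1))) := by
    rw [hdiff, abs_mul, abs_of_nonneg hρ0.le]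
    apply mul_le_mul_of_nonneg_left _ hρ0.le
    calc |(∫ y in (0:ℝ)..v, ((u - y) ^ (ρ - 1) * W y - (v - y) ^ (ρ - 1) * W y))
          + ∫ y in v..u, (u - y) ^ (ρ - 1) * W y|
        ≤ |∫ y in (0:ℝ)..v, ((u - y) ^ (ρ - 1) * W y - (v - y) ^ (ρ - 1) * W y)|
          + |∫ y in v..u, (u - y) ^ (ρ - 1) * W y| := abs_add_le _ _
      _ ≤ (∫ y in (0:ℝ)..v, M * (((u - y) ^ (ρ - 1) - (v - y) ^ (ρ - 1)) * y ^ α))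
          + ∫ y in v..u, M * ((u - y) ^ (ρ - 1) * y ^ α) := add_le_add hb1 hb2
      _ = M * ((∫ y in (0:ℝ)..u, (u - y) ^ (ρ - 1) * y ^ α)
          - ∫ y in (0:ℝ)..v, (v - y) ^ (ρ - 1) * y ^ α) := by
            rw [e1, e2, ← e3]; ring
      _ = M * ((u ^ (ρ + α) - v ^ (ρ + α)) * betaFn ρ (α + 1)) := by
            rw [hGu, hGv]; ring
  refine habs.trans ?_
  have : M * ((u ^ (ρ + α) - v ^ (ρ + α)) * betaFn ρ (α + 1))
      ≤ M * (((ρ + α) * T ^ (ρ + α - 1) * (u - v)) * betaFn ρ (α + 1)) :=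
    mul_le_mul_of_nonneg_left (mul_le_mul_of_nonneg_right hpow hBnn) hM
  calc ρ * (M * ((u ^ (ρ + α) - v ^ (ρ + α)) * betaFn ρ (α + 1)))
      ≤ ρ * (M * (((ρ + α) * T ^ (ρ + α - 1) * (u - v)) * betaFn ρ (α + 1))) :=
        mul_le_mul_of_nonneg_left this hρ0.le
    _ = ρ * (ρ + α) * M * betaFn ρ (α + 1) * T ^ (ρ + α - 1) * (u - v) := by ring
end

section
/- Let α > 0, 0 < ρ < 1 with α + ρ = 1, M ≥ 0, and 0 < v < u ≤ T. Then ρ ∫₀ᵛ M y^α (y^{ρ−1} − (y + u − v)^{ρ−1}) dy ≤ ρ M (u − v) ln(T/(u − v)). -/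
/-!
Since `α + ρ = 1`, the integrand simplifies to `M (1 - (y / (y + d))^α)` with `d = u - v`.
For `α ≤ 1` and a base in `[0, 1]` the power dominates the base, so the integrand is at most
`M d / (y + d)`, whose integral over `[0, v]` is `M d log (u / d) ≤ M d log (T / d)`.
-/

open MeasureTheory Real Set

lemma rpow_mul_sub_rpow_eq_one_sub_div_rpow {α ρ y d : ℝ} (hsum : α + ρ = 1) (hy : 0 < y)
    (hd : 0 ≤ d) :
    y ^ α * (y ^ (ρ - 1) - (y + d) ^ (ρ - 1)) = 1 - (y / (y + d)) ^ α := by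
  have hyd : 0 < y + d := by linarith
  have hρ : ρ - 1 = -α := by linarith
  rw [mul_sub, hρ, ← rpow_add hy, add_neg_cancel, rpow_zero, rpow_neg hyd.le,
    div_rpow hy.le hyd.le, div_eq_mul_inv]

lemma one_sub_div_rpow_le_div {α y d : ℝ} (hα : α ≤ 1) (hy : 0 ≤ y) (hd : 0 < d) :
    1 - (y / (y + d)) ^ α ≤ d / (y + d) := by
  have hyd : 0 < y + d := by linarith
  have hle : y / (y + d) ≤ (y / (y + d)) ^ α :=
    self_le_rpow_of_le_one (by positivity) ((div_le_one hyd).2 (by linarith)) hα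
  have hcompl : 1 - y / (y + d) = d / (y + d) := by field_simp; ring
  linarith

lemma integral_div_add_eq_mul_log {v d : ℝ} (hd : 0 < d) (hvd : 0 < v + d) :
    ∫ y in (0 : ℝ)..v, d / (y + d) = d * log ((v + d) / d) := by
  simp_rw [div_eq_mul_inv d]
  rw [intervalIntegral.integral_const_mul,
    intervalIntegral.integral_comp_add_right (fun y => y⁻¹) d, zero_add,
    integral_inv_of_pos hd hvd]

lemma integral_one_sub_div_rpow_le {α v d : ℝ} (hα0 : 0 ≤ α) (hα1 : α ≤ 1) (hv : 0 ≤ v)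
    (hd : 0 < d) :
    ∫ y in (0 : ℝ)..v, (1 - (y / (y + d)) ^ α) ≤ d * log ((v + d) / d) := by
  have hpos : ∀ y ∈ Icc (0 : ℝ) v, y + d ≠ 0 := fun y hy => by linarith [hy.1]
  have hlhs : ContinuousOn (fun y : ℝ => 1 - (y / (y + d)) ^ α) (Icc 0 v) :=
    continuousOn_const.sub <|
      ((continuousOn_id.div (by fun_prop) hpos).rpow_const fun _ _ => Or.inr hα0)
  have hrhs : ContinuousOn (fun y : ℝ => d / (y + d)) (Icc 0 v) :=
    continuousOn_const.div (by fun_prop) hpos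
  rw [← integral_div_add_eq_mul_log hd (by linarith)]
  exact intervalIntegral.integral_mono_on hv (hlhs.intervalIntegrable_of_Icc hv)
    (hrhs.intervalIntegrable_of_Icc hv) fun y hy => one_sub_div_rpow_le_div hα1 hy.1 hd

theorem I1_critical_case_general (α ρ M T u v : ℝ) (hα : 0 < α) (hρ0 : 0 < ρ)
    (hsum : α + ρ = 1) (hM : 0 ≤ M) (hv : 0 < v) (hvu : v < u) (huT : u ≤ T) :
    ρ * ∫ y in (0:ℝ)..v, M * y ^ α * (y ^ (ρ - 1) - (y + u - v) ^ (ρ - 1))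
      ≤ ρ * M * (u - v) * Real.log (T / (u - v)) := by
  have hd : 0 < u - v := sub_pos.2 hvu
  have hintegrand : ∀ y ∈ Ioc (0 : ℝ) v, M * y ^ α * (y ^ (ρ - 1) - (y + u - v) ^ (ρ - 1))
      = M * (1 - (y / (y + (u - v))) ^ α) := by
    intro y hy
    rw [mul_assoc, ← rpow_mul_sub_rpow_eq_one_sub_div_rpow hsum hy.1 hd.le, add_sub_assoc]
  have hbound : ∫ y in (0 : ℝ)..v, (1 - (y / (y + (u - v))) ^ α)
      ≤ (u - v) * log (u / (u - v)) := by
    simpa using integral_one_sub_div_rpow_le hα.le (by linarith) hv.le hd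
  calc ρ * ∫ y in (0 : ℝ)..v, M * y ^ α * (y ^ (ρ - 1) - (y + u - v) ^ (ρ - 1))
      = ρ * (M * ∫ y in (0 : ℝ)..v, (1 - (y / (y + (u - v))) ^ α)) := by
        rw [intervalIntegral.integral_of_le hv.le, setIntegral_congr_fun measurableSet_Ioc
          hintegrand, integral_const_mul, intervalIntegral.integral_of_le hv.le]
    _ ≤ ρ * (M * ((u - v) * log (u / (u - v)))) := by gcongr
    _ ≤ ρ * (M * ((u - v) * log (T / (u - v)))) := by gcongr; exact div_pos (hv.trans hvu) hd
    _ = ρ * M * (u - v) * log (T / (u - v)) := by ring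

theorem I1_critical_case (α ρ M T u v : ℝ) (hα : 0 < α) (hρ0 : 0 < ρ) (hρ1 : ρ < 1)
    (hsum : α + ρ = 1) (hM : 0 ≤ M) (hv : 0 < v) (hvu : v < u) (huT : u ≤ T) :
    ρ * ∫ y in (0:ℝ)..v, M * y ^ α * (y ^ (ρ - 1) - (y + u - v) ^ (ρ - 1))
      ≤ ρ * M * (u - v) * Real.log (T / (u - v)) :=
  I1_critical_case_general α ρ M T u v hα hρ0 hsum hM hv hvu huT
end

section
/- Let α > 0, u > 0, ρ > −α, M ≥ 0, and let W : [0, ∞) → ℝ satisfy W(0) = 0 and |W(x) − W(y)| ≤ M|x − y|^α for all x, y in a neighborhood of 0. Define Y_{α,ρ}(u) for ρ > 0 as ρ ∫₀ᵘ (u−y)^{ρ−1} W(y) dy and for −α < ρ < 0 as u^ρ W(u) + |ρ| ∫₀ᵘ (W(u) − W(u−y)) y^{ρ−1} dy, and set Y_{α,0} = W. Then lim_{u→0+} Y_{α,ρ}(u) = 0. -/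
/-!
Near `0` the Hölder condition and `W 0 = 0` give `|W x| ≤ M x^α` and `|W u - W (u - y)| ≤ M y^α`.
Inserting these into the two integral formulas bounds `|Y u|` by `M u^(ρ+α)` for `ρ > 0` and by
`M α (ρ+α)⁻¹ u^(ρ+α)` for `ρ < 0`; since `ρ + α > 0`, these bounds tend to `0`.
-/

open Filter Set Topology MeasureTheory intervalIntegral

lemma integral_rpow_sub_one {s : ℝ} (hs : 0 < s) (u : ℝ) :
    ∫ y in (0:ℝ)..u, y ^ (s - 1) = u ^ s / s := by
  rw [integral_rpow (Or.inl (by linarith)), sub_add_cancel, Real.zero_rpow hs.ne', sub_zero]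

lemma abs_mul_integral_sub_rpow_mul_le {ρ u K : ℝ} (hρ : 0 < ρ) (hu : 0 < u) {W : ℝ → ℝ}
    (hW : ∀ y ∈ Ioc 0 u, |W y| ≤ K) :
    |ρ * ∫ y in (0:ℝ)..u, (u - y) ^ (ρ - 1) * W y| ≤ K * u ^ ρ := by
  have hint : IntervalIntegrable (fun y ↦ K * (u - y) ^ (ρ - 1)) volume 0 u := by
    have hpow : IntervalIntegrable (fun y : ℝ ↦ y ^ (ρ - 1)) volume 0 u :=
      intervalIntegrable_rpow' (by linarith)
    simpa using (hpow.comp_sub_left u).const_mul K |>.symm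
  have hle : ‖∫ y in (0:ℝ)..u, (u - y) ^ (ρ - 1) * W y‖
      ≤ ∫ y in (0:ℝ)..u, K * (u - y) ^ (ρ - 1) := by
    refine norm_integral_le_of_norm_le hu.le (ae_of_all _ fun y ⟨hy0, hyu⟩ ↦ ?_) hint
    have hpow : 0 ≤ (u - y) ^ (ρ - 1) := Real.rpow_nonneg (by linarith) _
    rw [norm_mul, Real.norm_of_nonneg hpow, Real.norm_eq_abs, mul_comm]
    exact mul_le_mul_of_nonneg_right (hW y ⟨hy0, hyu⟩) hpow
  have hval : ∫ y in (0:ℝ)..u, K * (u - y) ^ (ρ - 1) = K * (u ^ ρ / ρ) := by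
    rw [intervalIntegral.integral_const_mul, integral_comp_sub_left (fun y ↦ y ^ (ρ - 1)),
      sub_self, sub_zero, integral_rpow_sub_one hρ]
  calc |ρ * ∫ y in (0:ℝ)..u, (u - y) ^ (ρ - 1) * W y|
      = ρ * ‖∫ y in (0:ℝ)..u, (u - y) ^ (ρ - 1) * W y‖ := by
        rw [abs_mul, abs_of_pos hρ, Real.norm_eq_abs]
    _ ≤ ρ * (K * (u ^ ρ / ρ)) := by rw [← hval]; exact mul_le_mul_of_nonneg_left hle hρ.le
    _ = K * u ^ ρ := by field_simp

lemma abs_integral_mul_rpow_sub_one_le {ρ α u M : ℝ} (hρα : 0 < ρ + α) (hu : 0 < u)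
    {f : ℝ → ℝ} (hf : ∀ y ∈ Ioc 0 u, |f y| ≤ M * y ^ α) :
    |∫ y in (0:ℝ)..u, f y * y ^ (ρ - 1)| ≤ M * (u ^ (ρ + α) / (ρ + α)) := by
  have hint : IntervalIntegrable (fun y ↦ M * y ^ (ρ + α - 1)) volume 0 u :=
    (intervalIntegrable_rpow' (by linarith)).const_mul M
  rw [← Real.norm_eq_abs, ← integral_rpow_sub_one hρα, ← intervalIntegral.integral_const_mul]
  refine norm_integral_le_of_norm_le hu.le (ae_of_all _ fun y ⟨hy0, hyu⟩ ↦ ?_) hint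
  have hpow : 0 ≤ y ^ (ρ - 1) := Real.rpow_nonneg hy0.le _
  calc ‖f y * y ^ (ρ - 1)‖ = |f y| * y ^ (ρ - 1) := by
        rw [norm_mul, Real.norm_of_nonneg hpow, Real.norm_eq_abs]
    _ ≤ M * y ^ α * y ^ (ρ - 1) := mul_le_mul_of_nonneg_right (hf y ⟨hy0, hyu⟩) hpow
    _ = M * y ^ (ρ + α - 1) := by
        rw [mul_assoc, ← Real.rpow_add hy0]; ring_nf

lemma abs_rpow_mul_add_integral_le {ρ α u M : ℝ} (hρ : ρ < 0) (hρα : 0 < ρ + α) (hu : 0 < u)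
    {W : ℝ → ℝ} (hWu : |W u| ≤ M * u ^ α)
    (hWsub : ∀ y ∈ Ioc 0 u, |W u - W (u - y)| ≤ M * y ^ α) :
    |u ^ ρ * W u + |ρ| * ∫ y in (0:ℝ)..u, (W u - W (u - y)) * y ^ (ρ - 1)|
      ≤ M * α / (ρ + α) * u ^ (ρ + α) := by
  have hfirst : |u ^ ρ * W u| ≤ M * u ^ (ρ + α) := by
    rw [abs_mul, abs_of_nonneg (Real.rpow_nonneg hu.le ρ), Real.rpow_add hu]
    nlinarith [Real.rpow_nonneg hu.le ρ]
  have hsecond := abs_integral_mul_rpow_sub_one_le hρα hu hWsub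
  calc _ ≤ |u ^ ρ * W u| + |ρ| * |∫ y in (0:ℝ)..u, (W u - W (u - y)) * y ^ (ρ - 1)| := by
        rw [← abs_abs ρ, ← abs_mul, abs_abs]; exact abs_add_le _ _
    _ ≤ M * u ^ (ρ + α) + -ρ * (M * (u ^ (ρ + α) / (ρ + α))) := by
        rw [abs_of_neg hρ]; gcongr; linarith
    _ = M * α / (ρ + α) * u ^ (ρ + α) := by field_simp; ring

lemma tendsto_zero_of_abs_le_mul_rpow {f : ℝ → ℝ} {C s : ℝ} (hs : 0 < s)
    (hf : ∀ᶠ u in 𝓝[>] 0, |f u| ≤ C * u ^ s) : Tendsto f (𝓝[>] 0) (𝓝 0) := by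
  have hpow : Tendsto (fun u : ℝ ↦ C * u ^ s) (𝓝[>] 0) (𝓝 0) := by
    simpa [Real.zero_rpow hs.ne'] using
      ((Real.continuousAt_rpow_const 0 s (Or.inr hs.le)).tendsto.const_mul C).mono_left
        nhdsWithin_le_nhds
  exact squeeze_zero_norm' hf hpow

theorem Y_tendsto_zero (α ρ M : ℝ) (hα : 0 < α) (hρ : -α < ρ) (hM : 0 ≤ M)
    (W : ℝ → ℝ) (hW0 : W 0 = 0)
    (hH : ∃ ε > (0:ℝ), ∀ x ∈ Set.Icc (0:ℝ) ε, ∀ y ∈ Set.Icc (0:ℝ) ε,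
      |W x - W y| ≤ M * |x - y| ^ α)
    (Y : ℝ → ℝ)
    (hYpos : 0 < ρ → ∀ u > (0:ℝ), Y u = ρ * ∫ y in (0:ℝ)..u, (u - y) ^ (ρ - 1) * W y)
    (hYneg : ρ < 0 → ∀ u > (0:ℝ),
      Y u = u ^ ρ * W u + |ρ| * ∫ y in (0:ℝ)..u, (W u - W (u - y)) * y ^ (ρ - 1))
    (hYzero : ρ = 0 → Y = W) :
    Tendsto Y (nhdsWithin 0 (Set.Ioi 0)) (nhds 0) := by
  obtain ⟨ε, hε, hH⟩ := hH
  have hρα : 0 < ρ + α := by linarith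
  have hW : ∀ x ∈ Icc 0 ε, |W x| ≤ M * x ^ α := fun x hx ↦ by
    simpa [hW0, abs_of_nonneg hx.1] using hH x hx 0 ⟨le_rfl, hε.le⟩
  have near : ∀ᶠ u in 𝓝[>] (0:ℝ), u ∈ Ioo 0 ε := Ioo_mem_nhdsGT hε
  rcases lt_trichotomy ρ 0 with hneg | rfl | hpos
  · refine tendsto_zero_of_abs_le_mul_rpow (C := M * α / (ρ + α)) hρα
      (near.mono fun u ⟨hu, huε⟩ ↦ ?_)
    rw [hYneg hneg u hu]
    refine abs_rpow_mul_add_integral_le hneg hρα hu (hW u ⟨hu.le, huε.le⟩) fun y ⟨hy, hyu⟩ ↦ ?_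
    simpa [abs_of_pos hy] using hH u ⟨hu.le, huε.le⟩ (u - y) ⟨by linarith, by linarith⟩
  · rw [hYzero rfl]
    exact tendsto_zero_of_abs_le_mul_rpow hα (near.mono fun u ⟨hu, huε⟩ ↦ hW u ⟨hu.le, huε.le⟩)
  · refine tendsto_zero_of_abs_le_mul_rpow (C := M) hρα (near.mono fun u ⟨hu, huε⟩ ↦ ?_)
    rw [hYpos hpos u hu, Real.rpow_add hu, ← mul_assoc, mul_right_comm]
    refine abs_mul_integral_sub_rpow_mul_le hpos hu fun y ⟨hy, hyu⟩ ↦ ?_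
    exact (hW y ⟨hy.le, hyu.trans huε.le⟩).trans (by gcongr)
end
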